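/- arXiv:1410.3044 — 2 statements merged into one kernel-verified Lean document; each statement's English description precedes it below -/
import Mathlib

section
/- For real z and ω ∈ (0, 2π), the absolute value of μ(z) = sinh((π−ω)(z+i/2))/sinh(π(z+i/2)) satisfies |μ(z)|² = (sinh²((π−ω)z)cos²((π−ω)/2) + cosh²((π−ω)z)sin²((π−ω)/2)) / cosh²(πz), and |μ(z)| < 1 for all real z. -/
/-! Writing `w = z + i/2`, the addition formula gives
`sinh(θw) = sinh(θz) cos(θ/2) + i cosh(θz) sin(θ/2)`, hence `|sinh(θw)|² = sinh²(θz) + sin²(θ/2)`.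
For `θ = π` this is `cosh²(πz)`, and for `|θ| < π` both summands are dominated:
`sinh²(θz) ≤ sinh²(πz)` by monotonicity of `sinh` and `sin²(θ/2) < 1`. -/

open Real Complex

lemma Complex.sinh_ofReal_mul_add_half_I (θ z : ℝ) :
    Complex.sinh ((θ : ℂ) * (z + Complex.I / 2)) =
      (Real.sinh (θ * z) * Real.cos (θ / 2) : ℝ) +
        (Real.cosh (θ * z) * Real.sin (θ / 2) : ℝ) * Complex.I := by
  have h : (θ : ℂ) * (z + Complex.I / 2) = ((θ * z : ℝ) : ℂ) + ((θ / 2 : ℝ) : ℂ) * Complex.I := by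
    push_cast; ring
  rw [h, Complex.sinh_add, Complex.sinh_mul_I, Complex.cosh_mul_I]
  push_cast
  ring

lemma Complex.sq_norm_sinh_ofReal_mul_add_half_I (θ z : ℝ) :
    ‖Complex.sinh ((θ : ℂ) * (z + Complex.I / 2))‖ ^ 2 =
      Real.sinh (θ * z) ^ 2 * Real.cos (θ / 2) ^ 2 +
        Real.cosh (θ * z) ^ 2 * Real.sin (θ / 2) ^ 2 := by
  rw [sinh_ofReal_mul_add_half_I, Complex.sq_norm, Complex.normSq_add_mul_I]
  ring

lemma Complex.sq_norm_sinh_ofReal_mul_add_half_I' (θ z : ℝ) :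
    ‖Complex.sinh ((θ : ℂ) * (z + Complex.I / 2))‖ ^ 2 =
      Real.sinh (θ * z) ^ 2 + Real.sin (θ / 2) ^ 2 := by
  rw [sq_norm_sinh_ofReal_mul_add_half_I, Real.cosh_sq]
  linear_combination Real.sinh (θ * z) ^ 2 * Real.cos_sq_add_sin_sq (θ / 2)

lemma Complex.sq_norm_sinh_pi_mul_add_half_I (z : ℝ) :
    ‖Complex.sinh ((π : ℂ) * (z + Complex.I / 2))‖ ^ 2 = Real.cosh (π * z) ^ 2 := by
  rw [sq_norm_sinh_ofReal_mul_add_half_I', Real.sin_pi_div_two, Real.cosh_sq]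
  ring

lemma Real.sinh_sq_le_sinh_sq {a b : ℝ} (h : |a| ≤ |b|) : Real.sinh a ^ 2 ≤ Real.sinh b ^ 2 := by
  rw [sq_le_sq, Real.abs_sinh, Real.abs_sinh]
  exact Real.sinh_le_sinh.2 h

lemma Real.sin_half_sq_lt_one {θ : ℝ} (h : |θ| < π) : Real.sin (θ / 2) ^ 2 < 1 := by
  have hcos : 0 < Real.cos (θ / 2) := by
    rw [abs_lt] at h
    exact Real.cos_pos_of_mem_Ioo ⟨by linarith, by linarith⟩
  nlinarith [Real.sin_sq_add_cos_sq (θ / 2)]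

lemma Complex.norm_sinh_ofReal_mul_add_half_I_lt {θ : ℝ} (h : |θ| < π) (z : ℝ) :
    ‖Complex.sinh ((θ : ℂ) * (z + Complex.I / 2))‖ <
      ‖Complex.sinh ((π : ℂ) * (z + Complex.I / 2))‖ := by
  have hsinh : Real.sinh (θ * z) ^ 2 ≤ Real.sinh (π * z) ^ 2 := by
    apply Real.sinh_sq_le_sinh_sq
    rw [abs_mul, abs_mul, abs_of_pos Real.pi_pos]
    exact mul_le_mul_of_nonneg_right h.le (abs_nonneg z)
  rw [← sq_lt_sq₀ (norm_nonneg _) (norm_nonneg _), sq_norm_sinh_ofReal_mul_add_half_I',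
    sq_norm_sinh_ofReal_mul_add_half_I', Real.sin_pi_div_two, one_pow]
  linarith [Real.sin_half_sq_lt_one h]

/-- For real `z` and `ω ∈ (0, 2π)`, the modulus of
`μ(z) = sinh((π−ω)(z+i/2))/sinh(π(z+i/2))` satisfies
`|μ(z)|² = (sinh²((π−ω)z)cos²((π−ω)/2) + cosh²((π−ω)z)sin²((π−ω)/2))/cosh²(πz)`
and `|μ(z)| < 1`. -/
theorem stmt12 (ω : ℝ) (hω : ω ∈ Set.Ioo (0 : ℝ) (2 * Real.pi)) (z : ℝ) :
    (‖Complex.sinh (((Real.pi : ℂ) - ω) * (z + Complex.I / 2)) /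
        Complex.sinh ((Real.pi : ℂ) * (z + Complex.I / 2))‖) ^ 2 =
      (Real.sinh ((Real.pi - ω) * z) ^ 2 * Real.cos ((Real.pi - ω) / 2) ^ 2 +
          Real.cosh ((Real.pi - ω) * z) ^ 2 * Real.sin ((Real.pi - ω) / 2) ^ 2) /
        Real.cosh (Real.pi * z) ^ 2 ∧
    ‖Complex.sinh (((Real.pi : ℂ) - ω) * (z + Complex.I / 2)) /
        Complex.sinh ((Real.pi : ℂ) * (z + Complex.I / 2))‖ < 1 := by
  have hcast : (π : ℂ) - ω = ((π - ω : ℝ) : ℂ) := by push_cast; ring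
  have hθ : |π - ω| < π := abs_lt.2 ⟨by linarith [hω.2], by linarith [hω.1]⟩
  rw [hcast, norm_div]
  refine ⟨?_, ?_⟩
  · rw [div_pow, sq_norm_sinh_ofReal_mul_add_half_I, sq_norm_sinh_pi_mul_add_half_I]
  · have hden : 0 < ‖Complex.sinh ((π : ℂ) * (z + Complex.I / 2))‖ :=
      (norm_nonneg _).trans_lt (norm_sinh_ofReal_mul_add_half_I_lt hθ z)
    exact (div_lt_one hden).2 (norm_sinh_ofReal_mul_add_half_I_lt hθ z)
end

section
/- Let K ∈ 𝒦(H) be compact and (G_n) with ‖G_n‖ → 0. Then the family J = {(P_n K P_n + G_n) : K compact, ‖G_n‖ → 0} is a closed two-sided ideal of the C*-algebra A of all bounded sequences (A_n) for which both strong limits s-lim A_n P_n = A and s-lim A_n* P_n = A* exist. -/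
open Filter ContinuousLinearMap

/-- The algebra `T` of bounded sequences of operators acting on `Im P_n`. -/
def memT {H : Type*} [NormedAddCommGroup H] [InnerProductSpace ℂ H]
    [CompleteSpace H] (P A : ℕ → H →L[ℂ] H) : Prop :=
  (∀ n, (P n).comp ((A n).comp (P n)) = A n) ∧ ∃ C : ℝ, ∀ n, ‖A n‖ ≤ C

/-- The set `G` of bounded sequences with `‖G_n‖ → 0`. -/
def memG {H : Type*} [NormedAddCommGroup H] [InnerProductSpace ℂ H]
    [CompleteSpace H] (P A : ℕ → H →L[ℂ] H) : Prop :=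
  memT P A ∧ Filter.Tendsto (fun n => ‖A n‖) Filter.atTop (nhds 0)

/-- The C*-algebra `A` of bounded sequences possessing both strong limits
`s-lim A_n P_n = L` and `s-lim A_n* P_n = L*`. -/
def memA {H : Type*} [NormedAddCommGroup H] [InnerProductSpace ℂ H]
    [CompleteSpace H] (P A : ℕ → H →L[ℂ] H) : Prop :=
  memT P A ∧ ∃ L : H →L[ℂ] H,
    (∀ x : H, Filter.Tendsto (fun n => (A n) (P n x)) Filter.atTop (nhds (L x))) ∧
    (∀ x : H, Filter.Tendsto (fun n => (ContinuousLinearMap.adjoint (A n)) (P n x))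
      Filter.atTop (nhds ((ContinuousLinearMap.adjoint L) x)))

/-- The family `J` of sequences of the form `(P_n K P_n + G_n)` with `K`
compact and `‖G_n‖ → 0`. -/
def memJ {H : Type*} [NormedAddCommGroup H] [InnerProductSpace ℂ H]
    [CompleteSpace H] (P A : ℕ → H →L[ℂ] H) : Prop :=
  ∃ K : H →L[ℂ] H, IsCompactOperator (⇑K) ∧
    ∃ G : ℕ → H →L[ℂ] H, memG P G ∧
      ∀ n, A n = (P n).comp (K.comp (P n)) + G n

/-!
A sequence in `J` has the form `P_n K P_n + G_n`; its strong limit is `K` and, the `P_n` being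
self-adjoint, that of its adjoints is `K*`. For `(A_n) ∈ A` with strong limit `L`,
`A_n J_n - P_n L K P_n = (A_n - P_n L) K P_n + A_n G_n`, and `A_n - P_n L` tends strongly to `0`
while staying bounded, hence (Arzelà–Ascoli) uniformly on the compact closure of the image of the
unit ball under `K`. Products on the other side follow by taking adjoints, which needs Schauder's
theorem that `K*` is compact. If `(A_n)` is uniformly `δ`-close to `P_n K P_n + G_n`, then the
strong limit `L` of `A_n` is `δ`-close to `K`; so `L` is compact and `A_n - P_n L P_n` is
eventually `3δ`-small.
-/

open Topology Metric
open scoped InnerProduct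

theorem TotallyBounded.image_of_forall_dist_lt {α β γ : Type*} [PseudoMetricSpace β]
    [PseudoMetricSpace γ] {f : α → β} {g : α → γ} {s : Set α} (hg : TotallyBounded (g '' s))
    (hfg : ∀ ε > 0, ∃ δ > 0, ∀ x ∈ s, ∀ y ∈ s, dist (g x) (g y) < δ → dist (f x) (f y) < ε) :
    TotallyBounded (f '' s) := by
  rw [Metric.totallyBounded_iff]
  intro ε hε
  obtain ⟨δ, hδ, hfg⟩ := hfg ε hε
  obtain ⟨t, hts, htfin, hcover⟩ :=
    Set.exists_subset_image_finite_and.1 (finite_approx_of_totallyBounded hg δ hδ)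
  refine ⟨f '' t, htfin.image f, ?_⟩
  rintro _ ⟨x, hx, rfl⟩
  obtain ⟨_, ⟨y, hy, rfl⟩, hxy⟩ := Set.mem_iUnion₂.1 (hcover ⟨x, hx, rfl⟩)
  exact Set.mem_iUnion₂.2 ⟨f y, Set.mem_image_of_mem f hy, hfg x hx y (hts hy) hxy⟩

theorem tendstoUniformlyOn_of_equicontinuous {ι X α : Type*} [TopologicalSpace X] [UniformSpace α]
    {F : ι → X → α} {f : X → α} {l : Filter ι} {S : Set X} (hS : IsCompact S)
    (hF : Equicontinuous F) (h : ∀ x, Tendsto (fun i => F i x) l (𝓝 (f x))) :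
    TendstoUniformlyOn F f l S := by
  have := (EquicontinuousOn.tendsto_uniformOnFun_iff_pi' (𝔖 := {S}) (by simpa using hS)
    (by simpa using hF.equicontinuousOn S) l f).2 ?_
  · exact UniformOnFun.tendsto_iff_tendstoUniformlyOn.1 this S rfl
  · exact tendsto_pi_nhds.2 fun x => h x

theorem tendsto_norm_comp_of_isCompactOperator {𝕜 E F G ι : Type*} [RCLike 𝕜]
    [NormedAddCommGroup E] [NormedAddCommGroup F] [NormedAddCommGroup G] [NormedSpace 𝕜 E]
    [NormedSpace 𝕜 F] [NormedSpace 𝕜 G] [CompleteSpace F] {l : Filter ι}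
    {T : ι → F →L[𝕜] G} (hTb : ∃ C, ∀ i, ‖T i‖ ≤ C) (hT : ∀ x, Tendsto (fun i => T i x) l (𝓝 0))
    {K : E →L[𝕜] F} (hK : IsCompactOperator K) :
    Tendsto (fun i => ‖(T i).comp K‖) l (𝓝 0) := by
  have hequi : Equicontinuous fun i => ⇑(T i) :=
    ((NormedSpace.equicontinuous_TFAE T).out 5 1).1 hTb
  have hunif := Metric.tendstoUniformlyOn_iff.1 <| tendstoUniformlyOn_of_equicontinuous (f := 0)
    (hK.isCompact_closure_image_closedBall 1) hequi hT
  refine Metric.tendsto_nhds.2 fun ε hε => (hunif (ε / 2) (half_pos hε)).mono fun i hi => ?_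
  have hle : ‖(T i).comp K‖ ≤ ε / 2 := by
    refine ContinuousLinearMap.opNorm_le_of_unit_norm (half_pos hε).le fun x hx => ?_
    have hKx : K x ∈ closure (K '' closedBall 0 1) :=
      subset_closure ⟨x, mem_closedBall_zero_iff.2 hx.le, rfl⟩
    simpa using (hi (K x) hKx).le
  rw [Real.dist_0_eq_abs, abs_of_nonneg (norm_nonneg _)]
  linarith

namespace ContinuousLinearMap

variable {𝕜 E F : Type*} [RCLike 𝕜] [NormedAddCommGroup E] [NormedAddCommGroup F]
  [InnerProductSpace 𝕜 E] [InnerProductSpace 𝕜 F] [CompleteSpace E] [CompleteSpace F]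

theorem norm_adjoint_apply_sq_le (A : E →L[𝕜] F) (v : F) :
    ‖adjoint A v‖ ^ 2 ≤ ‖v‖ * ‖A (adjoint A v)‖ := by
  rw [apply_norm_sq_eq_inner_adjoint_right, adjoint_adjoint]
  exact (RCLike.re_le_norm _).trans (norm_inner_le_norm _ _)

theorem _root_.IsCompactOperator.adjoint {K : E →L[𝕜] F} (hK : IsCompactOperator K) :
    IsCompactOperator (K†) := by
  refine (isCompactOperator_iff_isCompact_closure_image_closedBall
    ((K†) : F →ₗ[𝕜] E) one_pos).2 ?_
  refine (TotallyBounded.closure ?_).isCompact_of_isClosed isClosed_closure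
  -- on the unit ball, `‖K† v‖ ^ 2 ≤ ‖v‖ * ‖K (K† v)‖` lets the compact `K ∘ K†` control `K†`
  refine TotallyBounded.image_of_forall_dist_lt (g := K.comp (K†))
    (((hK.comp_clm (K†)).isCompact_closure_image_closedBall 1).totallyBounded.subset
      subset_closure) fun ε hε => ⟨ε ^ 2 / 2, by positivity, fun x hx y hy hxy => ?_⟩
  have hxy2 : ‖x - y‖ ≤ 2 := by
    rw [mem_closedBall_zero_iff] at hx hy
    linarith [norm_sub_le x y]
  rw [dist_eq_norm, ← map_sub] at hxy ⊢
  refine pow_lt_pow_iff_left₀ (norm_nonneg _) hε.le two_ne_zero |>.1 ?_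
  calc ‖(K†) (x - y)‖ ^ 2 ≤ ‖x - y‖ * ‖K ((K†) (x - y))‖ := K.norm_adjoint_apply_sq_le (x - y)
    _ ≤ 2 * ‖K ((K†) (x - y))‖ := by gcongr
    _ < 2 * (ε ^ 2 / 2) := by gcongr; exact hxy
    _ = ε ^ 2 := by ring

end ContinuousLinearMap

namespace ContinuousLinearMap

variable {R M : Type*} [Semiring R] [TopologicalSpace M] [AddCommMonoid M] [Module R M]
  {p A : M →L[R] M}

theorem comp_eq_self_of_compress (hp : p.comp p = p) (hA : p.comp (A.comp p) = A) :
    A.comp p = A := by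
  rw [← hA, comp_assoc, comp_assoc, hp]

theorem eq_comp_self_of_compress (hp : p.comp p = p) (hA : p.comp (A.comp p) = A) :
    p.comp A = A := by
  rw [← hA, ← comp_assoc, hp]

theorem apply_eq_of_compress (hp : p.comp p = p) (hA : p.comp (A.comp p) = A) (x : M) :
    A (p x) = A x :=
  congr($(comp_eq_self_of_compress hp hA) x)

theorem compress_compress (hp : p.comp p = p) (K : M →L[R] M) :
    p.comp ((p.comp (K.comp p)).comp p) = p.comp (K.comp p) := by
  rw [comp_assoc, comp_assoc, hp, ← comp_assoc p p, hp]

end ContinuousLinearMap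

section Compression

variable {𝕜 E : Type*} [NontriviallyNormedField 𝕜] [NormedAddCommGroup E] [NormedSpace 𝕜 E]
  {P : ℕ → E →L[𝕜] E}

theorem ContinuousLinearMap.norm_compress_le {p : E →L[𝕜] E} (hp : ‖p‖ ≤ 1) (K : E →L[𝕜] E) :
    ‖p.comp (K.comp p)‖ ≤ ‖K‖ :=
  calc ‖p.comp (K.comp p)‖ ≤ ‖p‖ * (‖K‖ * ‖p‖) :=
        (opNorm_comp_le _ _).trans (by gcongr; exact opNorm_comp_le _ _)
    _ ≤ 1 * (‖K‖ * 1) := by gcongr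
    _ = ‖K‖ := by ring

theorem tendsto_compress_apply (hP1 : ∀ n, ‖P n‖ ≤ 1)
    (hP : ∀ x : E, Tendsto (fun n => P n x) atTop (𝓝 x)) (K : E →L[𝕜] E) (x : E) :
    Tendsto (fun n => P n (K (P n x))) atTop (𝓝 (K x)) := by
  have hsmall : Tendsto (fun n => P n (K (P n x) - K x)) atTop (𝓝 0) := by
    refine squeeze_zero_norm (fun n => ((P n).le_of_opNorm_le (hP1 n) _).trans_eq (one_mul _)) ?_
    simpa using ((K.continuous.tendsto x).comp (hP x)).sub_const (K x) |>.norm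
  simpa using hsmall.add (hP (K x))

theorem tendsto_compress_add_apply (hidem : ∀ n, (P n).comp (P n) = P n) (hP1 : ∀ n, ‖P n‖ ≤ 1)
    (hP : ∀ x : E, Tendsto (fun n => P n x) atTop (𝓝 x)) (K : E →L[𝕜] E)
    {G : ℕ → E →L[𝕜] E} (hG : Tendsto (fun n => ‖G n‖) atTop (𝓝 0)) (x : E) :
    Tendsto (fun n => ((P n).comp (K.comp (P n)) + G n) (P n x)) atTop (𝓝 (K x)) := by
  have hGx : Tendsto (fun n => G n (P n x)) atTop (𝓝 0) := by
    refine squeeze_zero_norm (fun n => (G n).le_opNorm_of_le (?_ : ‖P n x‖ ≤ ‖x‖)) ?_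
    · exact ((P n).le_of_opNorm_le (hP1 n) x).trans_eq (one_mul _)
    · simpa using hG.mul_const ‖x‖
  have hPPx : ∀ n, P n (P n x) = P n x := fun n => congr($(hidem n) x)
  simpa [hPPx] using (tendsto_compress_apply hP1 hP K x).add hGx

theorem ContinuousLinearMap.opNorm_le_of_tendsto_apply {F ι : Type*} [NormedAddCommGroup F]
    [NormedSpace 𝕜 F] {l : Filter ι} [l.NeBot] {T : ι → E →L[𝕜] F} {S : E →L[𝕜] F} {C : ℝ}
    (hC : 0 ≤ C) (hT : ∀ i, ‖T i‖ ≤ C) (h : ∀ x, Tendsto (fun i => T i x) l (𝓝 (S x))) :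
    ‖S‖ ≤ C :=
  opNorm_le_bound S hC fun x =>
    le_of_tendsto (h x).norm (Eventually.of_forall fun i => (T i).le_of_opNorm_le (hT i) x)

end Compression

section SequenceAlgebras

variable {H : Type*} [NormedAddCommGroup H] [InnerProductSpace ℂ H] [CompleteSpace H]
  {P : ℕ → H →L[ℂ] H}

theorem norm_le_one_of_idempotent_of_adjoint_eq {p : H →L[ℂ] H} (hidem : p.comp p = p)
    (hsa : p† = p) : ‖p‖ ≤ 1 :=
  IsStarProjection.norm_le p ⟨hidem, hsa⟩

theorem adjoint_compress_add {p K G : H →L[ℂ] H} (hsa : p† = p) :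
    adjoint (p.comp (K.comp p) + G) = p.comp ((K†).comp p) + G† := by
  rw [map_add, adjoint_comp, adjoint_comp, hsa, comp_assoc]

theorem memT.adjoint (hsa : ∀ n, (P n)† = P n) {A : ℕ → H →L[ℂ] H} (hA : memT P A) :
    memT P (fun n => (A n)†) := by
  obtain ⟨hcomp, C, hC⟩ := hA
  refine ⟨fun n => ?_, C, fun n => by simpa using hC n⟩
  dsimp only
  conv_rhs => rw [← hcomp n]
  rw [adjoint_comp, adjoint_comp, hsa, comp_assoc]

theorem memT.add {A B : ℕ → H →L[ℂ] H} (hA : memT P A) (hB : memT P B) :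
    memT P (fun n => A n + B n) := by
  obtain ⟨hAc, CA, hCA⟩ := hA
  obtain ⟨hBc, CB, hCB⟩ := hB
  refine ⟨fun n => ?_, CA + CB, fun n => norm_add_le_of_le (hCA n) (hCB n)⟩
  rw [add_comp, comp_add, hAc, hBc]

theorem memG.adjoint (hsa : ∀ n, (P n)† = P n) {G : ℕ → H →L[ℂ] H} (hG : memG P G) :
    memG P (fun n => (G n)†) :=
  ⟨hG.1.adjoint hsa, by simpa using hG.2⟩

theorem memG.add {G₁ G₂ : ℕ → H →L[ℂ] H} (hG₁ : memG P G₁) (hG₂ : memG P G₂) :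
    memG P (fun n => G₁ n + G₂ n) :=
  ⟨hG₁.1.add hG₂.1, squeeze_zero (fun _ => norm_nonneg _) (fun _ => norm_add_le _ _)
    (by simpa using hG₁.2.add hG₂.2)⟩

theorem memG_of_tendsto {G : ℕ → H →L[ℂ] H} (hcomp : ∀ n, (P n).comp ((G n).comp (P n)) = G n)
    (hG : Tendsto (fun n => ‖G n‖) atTop (𝓝 0)) : memG P G := by
  obtain ⟨C, hC⟩ := hG.bddAbove_range
  exact ⟨⟨hcomp, C, fun n => hC ⟨n, rfl⟩⟩, hG⟩

theorem memT_of_memJ (hidem : ∀ n, (P n).comp (P n) = P n) (hP1 : ∀ n, ‖P n‖ ≤ 1)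
    {A : ℕ → H →L[ℂ] H} (hA : memJ P A) : memT P A := by
  obtain ⟨K, -, G, ⟨⟨hGc, C, hC⟩, -⟩, hA⟩ := hA
  obtain rfl : A = _ := funext hA
  refine ⟨fun n => ?_, ‖K‖ + C, fun n => norm_add_le_of_le (norm_compress_le (hP1 n) K) (hC n)⟩
  rw [add_comp, comp_add, hGc, compress_compress (hidem n)]

theorem memJ.adjoint (hsa : ∀ n, (P n)† = P n) {A : ℕ → H →L[ℂ] H} (hA : memJ P A) :
    memJ P (fun n => (A n)†) := by
  obtain ⟨K, hK, G, hG, hA⟩ := hA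
  obtain rfl : A = _ := funext hA
  exact ⟨K†, hK.adjoint, fun n => (G n)†, hG.adjoint hsa, fun n => adjoint_compress_add (hsa n)⟩

theorem memA_of_memJ (hidem : ∀ n, (P n).comp (P n) = P n) (hsa : ∀ n, (P n)† = P n)
    (hP : ∀ x : H, Tendsto (fun n => P n x) atTop (𝓝 x)) {A : ℕ → H →L[ℂ] H}
    (hA : memJ P A) : memA P A := by
  have hP1 n := norm_le_one_of_idempotent_of_adjoint_eq (hidem n) (hsa n)
  refine ⟨memT_of_memJ hidem hP1 hA, ?_⟩
  obtain ⟨K, -, G, hG, hA⟩ := hA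
  obtain rfl : A = _ := funext hA
  refine ⟨K, tendsto_compress_add_apply hidem hP1 hP K hG.2, fun x => ?_⟩
  simpa only [adjoint_compress_add (hsa _)] using
    tendsto_compress_add_apply hidem hP1 hP (K†) (hG.adjoint hsa).2 x

theorem memJ_of_tendsto (hidem : ∀ n, (P n).comp (P n) = P n) {A : ℕ → H →L[ℂ] H}
    (hA : ∀ n, (P n).comp ((A n).comp (P n)) = A n) {K : H →L[ℂ] H} (hK : IsCompactOperator K)
    (h : Tendsto (fun n => ‖A n - (P n).comp (K.comp (P n))‖) atTop (𝓝 0)) : memJ P A := by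
  refine ⟨K, hK, _, memG_of_tendsto (fun n => ?_) h, fun n => (add_sub_cancel _ _).symm⟩
  rw [sub_comp, comp_sub, hA, compress_compress (hidem n)]

theorem memA.adjoint (hsa : ∀ n, (P n)† = P n) {A : ℕ → H →L[ℂ] H} (hA : memA P A) :
    memA P (fun n => (A n)†) := by
  obtain ⟨hAT, L, hL, hLadj⟩ := hA
  exact ⟨hAT.adjoint hsa, L†, hLadj, by simpa only [adjoint_adjoint] using hL⟩

theorem memJ.add {J₁ J₂ : ℕ → H →L[ℂ] H} (hJ₁ : memJ P J₁) (hJ₂ : memJ P J₂) :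
    memJ P (fun n => J₁ n + J₂ n) := by
  obtain ⟨K₁, hK₁, G₁, hG₁, h₁⟩ := hJ₁
  obtain ⟨K₂, hK₂, G₂, hG₂, h₂⟩ := hJ₂
  refine ⟨K₁ + K₂, hK₁.add hK₂, _, hG₁.add hG₂, fun n => ?_⟩
  dsimp only
  rw [h₁ n, h₂ n, add_comp, comp_add]
  abel

theorem memJ.comp_left (hidem : ∀ n, (P n).comp (P n) = P n) (hP1 : ∀ n, ‖P n‖ ≤ 1)
    (hP : ∀ x : H, Tendsto (fun n => P n x) atTop (𝓝 x)) {A J : ℕ → H →L[ℂ] H}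
    (hJ : memJ P J) (hA : memA P A) : memJ P (fun n => (A n).comp (J n)) := by
  obtain ⟨⟨hAc, C, hC⟩, L, hL, -⟩ := hA
  have hAP n := comp_eq_self_of_compress (hidem n) (hAc n)
  have hJP n := comp_eq_self_of_compress (hidem n) ((memT_of_memJ hidem hP1 hJ).1 n)
  obtain ⟨K, hK, G, hG, hJ⟩ := hJ
  refine memJ_of_tendsto hidem (K := L.comp K) (fun n => ?_) (hK.clm_comp L) ?_
  · rw [comp_assoc, hJP, ← comp_assoc, eq_comp_self_of_compress (hidem n) (hAc n)]
  set T : ℕ → H →L[ℂ] H := fun n => A n - (P n).comp L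
  have hT : ∀ x, Tendsto (fun n => T n x) atTop (𝓝 0) := fun x => by
    simpa [T, apply_eq_of_compress (hidem _) (hAc _)] using (hL x).sub (hP (L x))
  have hTb n : ‖T n‖ ≤ C + ‖L‖ := norm_sub_le_of_le (hC n)
    ((opNorm_comp_le _ _).trans (mul_le_of_le_one_left (norm_nonneg _) (hP1 n)))
  have hdecomp n : (A n).comp (J n) - (P n).comp ((L.comp K).comp (P n)) =
      ((T n).comp K).comp (P n) + (A n).comp (G n) := by
    simp only [T, hJ n, comp_add, sub_comp, ← comp_assoc, hAP]
    abel
  have hbound n : ‖(A n).comp (J n) - (P n).comp ((L.comp K).comp (P n))‖ ≤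
      ‖(T n).comp K‖ + C * ‖G n‖ := by
    rw [hdecomp]
    exact norm_add_le_of_le
      ((opNorm_comp_le _ _).trans (mul_le_of_le_one_right (norm_nonneg _) (hP1 n)))
      ((opNorm_comp_le _ _).trans (mul_le_mul_of_nonneg_right (hC n) (norm_nonneg _)))
  refine squeeze_zero (fun _ => norm_nonneg _) hbound ?_
  simpa using (tendsto_norm_comp_of_isCompactOperator ⟨_, hTb⟩ hT hK).add (hG.2.const_mul C)

theorem memJ.comp_right (hidem : ∀ n, (P n).comp (P n) = P n) (hsa : ∀ n, (P n)† = P n)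
    (hP : ∀ x : H, Tendsto (fun n => P n x) atTop (𝓝 x)) {A J : ℕ → H →L[ℂ] H}
    (hJ : memJ P J) (hA : memA P A) : memJ P (fun n => (J n).comp (A n)) := by
  have hP1 n := norm_le_one_of_idempotent_of_adjoint_eq (hidem n) (hsa n)
  simpa only [adjoint_comp, adjoint_adjoint] using
    ((hJ.adjoint hsa).comp_left hidem hP1 hP (hA.adjoint hsa)).adjoint hsa

theorem memJ_of_forall_norm_sub_le (hidem : ∀ n, (P n).comp (P n) = P n)
    (hP1 : ∀ n, ‖P n‖ ≤ 1) (hP : ∀ x : H, Tendsto (fun n => P n x) atTop (𝓝 x))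
    {A : ℕ → H →L[ℂ] H} (hA : memA P A)
    (happrox : ∀ δ > 0, ∃ J, memJ P J ∧ ∀ n, ‖A n - J n‖ ≤ δ) : memJ P A := by
  obtain ⟨⟨hAc, -⟩, L, hL, -⟩ := hA
  have hAx : ∀ x, Tendsto (fun n => A n x) atTop (𝓝 (L x)) := fun x => by
    simpa only [apply_eq_of_compress (hidem _) (hAc _)] using hL x
  have happrox' : ∀ δ > 0, ∃ K : H →L[ℂ] H, IsCompactOperator K ∧ ‖L - K‖ ≤ δ ∧
      ∃ G : ℕ → H →L[ℂ] H, Tendsto (fun n => ‖G n‖) atTop (𝓝 0) ∧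
        ∀ n, ‖A n - (P n).comp (L.comp (P n))‖ ≤ 2 * δ + ‖G n‖ := by
    intro δ hδ
    obtain ⟨J, hJ, hAJ⟩ := happrox δ hδ
    have hJc := (memT_of_memJ hidem hP1 hJ).1
    obtain ⟨K, hK, G, hG, hJ⟩ := hJ
    have hJx x : Tendsto (fun n => J n x) atTop (𝓝 (K x)) := by
      simpa only [← hJ, apply_eq_of_compress (hidem _) (hJc _)] using
        tendsto_compress_add_apply hidem hP1 hP K hG.2 x
    have hLK : ‖L - K‖ ≤ δ := opNorm_le_of_tendsto_apply hδ.le hAJ fun x => (hAx x).sub (hJx x)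
    refine ⟨K, hK, hLK, G, hG.2, fun n => ?_⟩
    have hdecomp : A n - (P n).comp (L.comp (P n)) =
        (A n - J n) + (P n).comp ((K - L).comp (P n)) + G n := by
      rw [hJ n, sub_comp, comp_sub]
      abel
    rw [hdecomp, two_mul]
    refine norm_add_le_of_le (norm_add_le_of_le (hAJ n) ?_) le_rfl
    exact (norm_compress_le (hP1 n) _).trans (by rwa [norm_sub_rev])
  have hL : IsCompactOperator L := by
    refine isClosed_setOfPred_isCompactOperator.closure_subset (Metric.mem_closure_iff.2 ?_)
    intro ε hε
    obtain ⟨K, hK, hLK, -⟩ := happrox' (ε / 2) (half_pos hε)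
    exact ⟨K, hK, (dist_eq_norm L K).trans_le hLK |>.trans_lt (half_lt_self hε)⟩
  refine memJ_of_tendsto hidem hAc hL (tendsto_order.2 ⟨fun a ha => Eventually.of_forall
    fun n => ha.trans_le (norm_nonneg _), fun ε hε => ?_⟩)
  obtain ⟨K, -, -, G, hG, hAG⟩ := happrox' (ε / 4) (by positivity)
  filter_upwards [hG.eventually (gt_mem_nhds (half_pos hε))] with n hn
  linarith [hAG n]

end SequenceAlgebras

/-- `J = {(P_n K P_n + G_n) : K compact, ‖G_n‖ → 0}` is contained in the
C*-algebra `A` of sequences possessing both strong limits, and it is a closed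
two-sided ideal of `A`. -/
theorem stmt19 {H : Type*} [NormedAddCommGroup H] [InnerProductSpace ℂ H]
    [CompleteSpace H] (P : ℕ → H →L[ℂ] H)
    (hidem : ∀ n, (P n).comp (P n) = P n)
    (hsa : ∀ n, ContinuousLinearMap.adjoint (P n) = P n)
    (hP : ∀ x : H, Filter.Tendsto (fun n => P n x) Filter.atTop (nhds x)) :
    (∀ A : ℕ → H →L[ℂ] H, memJ P A → memA P A) ∧
    (∀ A J : ℕ → H →L[ℂ] H, memA P A → memJ P J →
      memJ P (fun n => (A n).comp (J n)) ∧ memJ P (fun n => (J n).comp (A n))) ∧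
    (∀ J₁ J₂ : ℕ → H →L[ℂ] H, memJ P J₁ → memJ P J₂ →
      memJ P (fun n => J₁ n + J₂ n)) ∧
    (∀ A : ℕ → H →L[ℂ] H, memA P A →
      (∀ δ : ℝ, 0 < δ → ∃ J : ℕ → H →L[ℂ] H, memJ P J ∧ ∀ n, ‖A n - J n‖ ≤ δ) →
      memJ P A) := by
  have hP1 n := norm_le_one_of_idempotent_of_adjoint_eq (hidem n) (hsa n)
  exact ⟨fun _ => memA_of_memJ hidem hsa hP,
    fun _ _ hA hJ => ⟨hJ.comp_left hidem hP1 hP hA, hJ.comp_right hidem hsa hP hA⟩,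
    fun _ _ => memJ.add,
    fun _ => memJ_of_forall_norm_sub_le hidem hP1 hP⟩
end
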